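/- Assume φ(p)φ(q) ≠ 0. For any a₀,…,a_m ∈ ℂ[x] and s, t ∈ ℤ₊, in M_φ one has: (q − φ(q))ˢ·(hᵗ Σ_{i=0}^{m} fⁱ aᵢ(C)·w) = 0 if s > t, and (q − φ(q))ᵗ·(hᵗ Σ_{i=0}^{m} fⁱ aᵢ(C)·w) = t! φ(q)ᵗ Σ_{i=0}^{m} fⁱ aᵢ(C)·w. -/

import Mathlib

open UniversalEnvelopingAlgebra Polynomial

namespace QW

variable {S : Type} [LieRing S] [LieAlgebra ℂ S]

/-- The chosen elements `e, h, f, p, q, z` form a basis of `S` and satisfy the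
structure constants of the Schrödinger algebra. -/
structure IsSchrodinger (e h f p q z : S) : Prop where
  indep : LinearIndependent ℂ ![e, h, f, p, q, z]
  spans : Submodule.span ℂ (Set.range ![e, h, f, p, q, z]) = ⊤
  lie_he : ⁅h, e⁆ = (2 : ℂ) • e
  lie_hf : ⁅h, f⁆ = (-2 : ℂ) • f
  lie_ef : ⁅e, f⁆ = h
  lie_hp : ⁅h, p⁆ = p
  lie_hq : ⁅h, q⁆ = -q
  lie_pq : ⁅p, q⁆ = z
  lie_eq : ⁅e, q⁆ = p
  lie_pf : ⁅p, f⁆ = -q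
  lie_fq : ⁅f, q⁆ = 0
  lie_ep : ⁅e, p⁆ = 0
  lie_ze : ⁅z, e⁆ = 0
  lie_zh : ⁅z, h⁆ = 0
  lie_zf : ⁅z, f⁆ = 0
  lie_zp : ⁅z, p⁆ = 0
  lie_zq : ⁅z, q⁆ = 0

/-- `v` is a quasi-Whittaker vector of type `φ`, where the Lie algebra homomorphism
`φ : ℌ → ℂ` is recorded by its values `φp = φ(p)`, `φq = φ(q)` (necessarily `φ(z) = 0`). -/
def IsQWVector (p q z : S) {V : Type} [AddCommGroup V] [Module ℂ V] [LieRingModule S V]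
    (φp φq : ℂ) (v : V) : Prop :=
  v ≠ 0 ∧ ⁅p, v⁆ = φp • v ∧ ⁅q, v⁆ = φq • v ∧ ⁅z, v⁆ = 0

/-- `V` is a quasi-Whittaker module of type `φ`: it is generated by a
quasi-Whittaker vector of type `φ`. -/
def IsQWModule (p q z : S) (V : Type) [AddCommGroup V] [Module ℂ V]
    [LieRingModule S V] [LieModule ℂ S V] (φp φq : ℂ) : Prop :=
  ∃ v : V, IsQWVector p q z φp φq v ∧ LieSubmodule.lieSpan ℂ S {v} = ⊤

/-- The action of the universal enveloping algebra `U(𝔖)` on a `𝔖`-module. -/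
noncomputable def uact {V : Type} [AddCommGroup V] [Module ℂ V] [LieRingModule S V]
    [LieModule ℂ S V] (u : UniversalEnvelopingAlgebra ℂ S) (v : V) : V :=
  UniversalEnvelopingAlgebra.lift ℂ (LieModule.toEnd ℂ S V) u v

/-- The element `C = φ(p)²f − φ(q)²e − φ(p)φ(q)h ∈ U(𝔖)`. -/
noncomputable def Cel (e h f : S) (φp φq : ℂ) : UniversalEnvelopingAlgebra ℂ S :=
  φp ^ 2 • ι ℂ f - φq ^ 2 • ι ℂ e - (φp * φq) • ι ℂ h

/-- The element `C₀ = p²f − q²e − hpq ∈ U(𝔖)`. -/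
noncomputable def C0 (e h f p q : S) : UniversalEnvelopingAlgebra ℂ S :=
  ι ℂ p ^ 2 * ι ℂ f - ι ℂ q ^ 2 * ι ℂ e - ι ℂ h * ι ℂ p * ι ℂ q

/-- `δ_{a,0}`, as a complex scalar. -/
noncomputable def dC (a : ℂ) : ℂ := if a = 0 then 1 else 0

/-- `δ_{a,0}`, as a natural number. -/
noncomputable def dN (a : ℂ) : ℕ := if a = 0 then 1 else 0

/-- `X = δ_{φ(q),0}e + δ_{φ(p),0}f`. -/
noncomputable def Xel (e f : S) (φp φq : ℂ) : UniversalEnvelopingAlgebra ℂ S :=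
  dC φq • ι ℂ e + dC φp • ι ℂ f

/-- `P₊ = δ_{φ(p),0}p + δ_{φ(q),0}q`. -/
noncomputable def Pplus (p q : S) (φp φq : ℂ) : UniversalEnvelopingAlgebra ℂ S :=
  dC φp • ι ℂ p + dC φq • ι ℂ q

/-- `P₋ = δ_{φ(q),0}p + δ_{φ(p),0}q`. -/
noncomputable def Pminus (p q : S) (φp φq : ℂ) : UniversalEnvelopingAlgebra ℂ S :=
  dC φq • ι ℂ p + dC φp • ι ℂ q

/-- The quotient of `U(𝔖)` by a left ideal `I` is a Lie module over `S`. -/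
noncomputable instance instLieRingModuleUQuot
    (I : Submodule (UniversalEnvelopingAlgebra ℂ S) (UniversalEnvelopingAlgebra ℂ S)) :
    LieRingModule S (UniversalEnvelopingAlgebra ℂ S ⧸ I) where
  bracket x m := ι ℂ x • m
  add_lie x y m := by
    show ι ℂ (x + y) • m = ι ℂ x • m + ι ℂ y • m
    rw [map_add, add_smul]
  lie_add x m n := by
    show ι ℂ x • (m + n) = ι ℂ x • m + ι ℂ x • n
    rw [smul_add]
  leibniz_lie x y m := by
    show ι ℂ x • (ι ℂ y • m) = ι ℂ ⁅x, y⁆ • m + ι ℂ y • (ι ℂ x • m)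
    letI : LieRing (UniversalEnvelopingAlgebra ℂ S) := LieRing.ofAssociativeRing
    rw [LieHom.map_lie, Ring.lie_def, sub_smul, mul_smul, mul_smul]
    abel

noncomputable instance instLieModuleUQuot
    (I : Submodule (UniversalEnvelopingAlgebra ℂ S) (UniversalEnvelopingAlgebra ℂ S)) :
    LieModule ℂ S (UniversalEnvelopingAlgebra ℂ S ⧸ I) where
  smul_lie c x m := by
    show ι ℂ (c • x) • m = c • (ι ℂ x • m)
    rw [map_smul, smul_assoc]
  lie_smul c x m := by
    show ι ℂ x • (c • m) = c • (ι ℂ x • m)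
    rw [← algebraMap_smul (UniversalEnvelopingAlgebra ℂ S) c m, ← mul_smul,
      ← Algebra.commutes, mul_smul, algebraMap_smul]

/-- The left ideal of `U(𝔖)` generated by `p − φ(p)1`, `q − φ(q)1` and `z`. -/
noncomputable def qwIdeal (p q z : S) (φp φq : ℂ) :
    Submodule (UniversalEnvelopingAlgebra ℂ S) (UniversalEnvelopingAlgebra ℂ S) :=
  Submodule.span _
    {ι ℂ p - algebraMap ℂ _ φp, ι ℂ q - algebraMap ℂ _ φq, ι ℂ z}

/-- The universal quasi-Whittaker module `M_φ = U(𝔖) ⊗_{U(ℌ)} ℂ_φ`, realised as the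
quotient of `U(𝔖)` by the left ideal generated by `p − φ(p)1`, `q − φ(q)1`, `z`. -/
noncomputable abbrev Mphi (p q z : S) (φp φq : ℂ) : Type :=
  UniversalEnvelopingAlgebra ℂ S ⧸ qwIdeal p q z φp φq

/-- The cyclic quasi-Whittaker vector `w = 1 ⊗ w` of `M_φ`. -/
noncomputable def wvec (p q z : S) (φp φq : ℂ) : Mphi p q z φp φq :=
  Submodule.Quotient.mk 1

/-- The submodule `W_{φ,ξ} = U(𝔖)(C − ξ)·w` of `M_φ`. -/
noncomputable def Wsub (e h f p q z : S) (φp φq ξ : ℂ) :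
    LieSubmodule ℂ S (Mphi p q z φp φq) :=
  LieSubmodule.lieSpan ℂ S
    {uact (Cel e h f φp φq - algebraMap ℂ _ ξ) (wvec p q z φp φq)}

/-- The quotient module `L_{φ,ξ} = M_φ / W_{φ,ξ}`. -/
noncomputable abbrev Lphi (e h f p q z : S) (φp φq ξ : ℂ) : Type :=
  Mphi p q z φp φq ⧸ Wsub e h f p q z φp φq ξ

/-- A (finite, decreasing) composition series `⊤ = W 0 > W 1 > ⋯ > W n = ⊥`
of a Lie module, with all the successive quotients irreducible. -/
def IsCompositionChain {V : Type} [AddCommGroup V] [Module ℂ V] [LieRingModule S V]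
    [LieModule ℂ S V] {n : ℕ} (W : Fin (n + 1) → LieSubmodule ℂ S V) : Prop :=
  W 0 = ⊤ ∧ W (Fin.last n) = ⊥ ∧
    ∀ i : Fin n, W i.succ < W i.castSucc ∧
      LieModule.IsIrreducible ℂ S
        (↥(W i.castSucc) ⧸ LieSubmodule.comap (W i.castSucc).incl (W i.succ))


/-! ### Auxiliary lemmas -/

section Aux

attribute [local instance] LieRing.ofAssociativeRing

open Function

/-- The forward difference operator on polynomials. -/
noncomputable def Dop (P : ℂ[X]) : ℂ[X] := taylor 1 P - P

lemma coeff_Dop_of_le (P : ℂ[X]) (j : ℕ) (hP : P.natDegree ≤ j) :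
    (Dop P).coeff j = 0 := by
  have h1 : (taylor (1:ℂ) P).coeff j = (hasseDeriv j P).eval 1 := taylor_coeff 1 P j
  have h2 : (hasseDeriv j P).natDegree < 1 :=
    lt_of_le_of_lt (natDegree_hasseDeriv_le P j) (by omega)
  have h3 : (hasseDeriv j P).eval 1 = ∑ i ∈ Finset.range 1, (hasseDeriv j P).coeff i * 1 ^ i :=
    eval_eq_sum_range' h2 1
  simp only [Finset.sum_range_one, pow_zero, mul_one, hasseDeriv_coeff, zero_add,
    Nat.choose_self, Nat.cast_one, one_mul] at h3
  simp [Dop, coeff_sub, h1, h3]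

lemma natDegree_Dop_le (P : ℂ[X]) (n : ℕ) (hP : P.natDegree ≤ n + 1) :
    (Dop P).natDegree ≤ n := by
  rw [natDegree_le_iff_coeff_eq_zero]
  intro N hN
  exact coeff_Dop_of_le P N (le_trans hP hN)

lemma coeff_Dop (P : ℂ[X]) (n : ℕ) (hP : P.natDegree ≤ n + 1) :
    (Dop P).coeff n = (n + 1) * P.coeff (n + 1) := by
  have h1 : (taylor (1:ℂ) P).coeff n = (hasseDeriv n P).eval 1 := taylor_coeff 1 P n
  have h2 : (hasseDeriv n P).natDegree < 2 :=
    lt_of_le_of_lt (natDegree_hasseDeriv_le P n) (by omega)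
  have h3 := eval_eq_sum_range' h2 (1 : ℂ)
  simp only [Finset.sum_range_succ, Finset.sum_range_zero, pow_zero, mul_one, one_pow,
    hasseDeriv_coeff, zero_add, Nat.add_comm 1, Nat.choose_self, Nat.cast_one, one_mul,
    Nat.choose_succ_self_right, zero_add] at h3
  rw [Dop, coeff_sub, h1, h3]
  push_cast
  ring

lemma Dop_key (t : ℕ) : ∀ P : ℂ[X], P.natDegree ≤ t →
    Dop^[t+1] P = 0 ∧ Dop^[t] P = C ((t.factorial : ℂ) * P.coeff t) := by
  induction t with
  | zero =>
    intro P hP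
    obtain ⟨c, rfl⟩ := Polynomial.natDegree_eq_zero.mp (Nat.le_zero.mp hP)
    constructor
    · simp [Dop]
    · simp
  | succ t ih =>
    intro P hP
    have hd : (Dop P).natDegree ≤ t := natDegree_Dop_le P t hP
    obtain ⟨h1, h2⟩ := ih (Dop P) hd
    constructor
    · show Dop^[t+1+1] P = 0
      rw [Function.iterate_succ_apply]
      exact h1
    · rw [Function.iterate_succ_apply, h2, coeff_Dop P t hP, Nat.factorial_succ]
      push_cast
      ring_nf

lemma aeval_Dop {A : Type} [Ring A] [Algebra ℂ A] (x : A) (P : ℂ[X]) :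
    aeval x (Dop P) = aeval (x + 1) P - aeval x P := by
  rw [Dop, map_sub, taylor_apply, aeval_comp, map_add, aeval_X, aeval_C, map_one]

lemma uact_eq_smul (I : Submodule (UniversalEnvelopingAlgebra ℂ S) (UniversalEnvelopingAlgebra ℂ S))
    (u : UniversalEnvelopingAlgebra ℂ S)
    (m : UniversalEnvelopingAlgebra ℂ S ⧸ I) : uact u m = u • m := by
  have key : UniversalEnvelopingAlgebra.lift ℂ
      (LieModule.toEnd ℂ S (UniversalEnvelopingAlgebra ℂ S ⧸ I)) =
      Algebra.lsmul ℂ ℂ (UniversalEnvelopingAlgebra ℂ S ⧸ I) := by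
    apply UniversalEnvelopingAlgebra.hom_ext
    apply LieHom.ext
    intro x
    show UniversalEnvelopingAlgebra.lift ℂ _ (ι ℂ x) = Algebra.lsmul ℂ ℂ _ (ι ℂ x)
    rw [UniversalEnvelopingAlgebra.lift_ι_apply]
    refine LinearMap.ext fun m => ?_
    rfl
  simp only [uact]
  rw [key]
  rfl

lemma uact_mk (I : Submodule (UniversalEnvelopingAlgebra ℂ S) (UniversalEnvelopingAlgebra ℂ S))
    (u v : UniversalEnvelopingAlgebra ℂ S) :
    uact u (Submodule.Quotient.mk v : UniversalEnvelopingAlgebra ℂ S ⧸ I) =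
      Submodule.Quotient.mk (u * v) := by
  rw [uact_eq_smul]
  rfl

lemma iota_mul (x y : S) :
    ι ℂ x * ι ℂ y = ι ℂ y * ι ℂ x + ι ℂ ⁅x, y⁆ := by
  have hl := LieHom.map_lie (ι ℂ (L := S)) x y
  rw [Ring.lie_def] at hl
  rw [hl]
  abel

variable (e h f p q z : S) (φp φq : ℂ)

lemma comm_qf (hS : IsSchrodinger e h f p q z) : ι ℂ q * ι ℂ f = ι ℂ f * ι ℂ q := by
  rw [iota_mul q f]
  have hx : ⁅q, f⁆ = 0 := by rw [← lie_skew, hS.lie_fq, neg_zero]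
  rw [hx]; simp

lemma comm_qe (hS : IsSchrodinger e h f p q z) : ι ℂ q * ι ℂ e = ι ℂ e * ι ℂ q - ι ℂ p := by
  rw [iota_mul q e]
  have hx : ⁅q, e⁆ = -p := by rw [← lie_skew, hS.lie_eq]
  rw [hx]; simp [sub_eq_add_neg]

lemma comm_qh (hS : IsSchrodinger e h f p q z) : ι ℂ q * ι ℂ h = ι ℂ h * ι ℂ q + ι ℂ q := by
  rw [iota_mul q h]
  have hx : ⁅q, h⁆ = q := by rw [← lie_skew, hS.lie_hq, neg_neg]
  rw [hx]

lemma comm_pf (hS : IsSchrodinger e h f p q z) : ι ℂ p * ι ℂ f = ι ℂ f * ι ℂ p - ι ℂ q := by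
  rw [iota_mul p f, hS.lie_pf]; simp [sub_eq_add_neg]

lemma comm_pe (hS : IsSchrodinger e h f p q z) : ι ℂ p * ι ℂ e = ι ℂ e * ι ℂ p := by
  rw [iota_mul p e]
  have hx : ⁅p, e⁆ = 0 := by rw [← lie_skew, hS.lie_ep, neg_zero]
  rw [hx]; simp

lemma comm_ph (hS : IsSchrodinger e h f p q z) : ι ℂ p * ι ℂ h = ι ℂ h * ι ℂ p - ι ℂ p := by
  rw [iota_mul p h]
  have hx : ⁅p, h⁆ = -p := by rw [← lie_skew, hS.lie_hp]
  rw [hx]; simp [sub_eq_add_neg]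

lemma qCel (hS : IsSchrodinger e h f p q z) :
    (ι ℂ q - algebraMap ℂ _ φq) * Cel e h f φp φq
      = Cel e h f φp φq * (ι ℂ q - algebraMap ℂ _ φq)
        + φq ^ 2 • (ι ℂ p - algebraMap ℂ _ φp)
        - (φp * φq) • (ι ℂ q - algebraMap ℂ _ φq) := by
  simp only [Cel, Algebra.algebraMap_eq_smul_one, sub_mul, mul_sub, smul_mul_assoc,
    mul_smul_comm, one_mul, mul_one, comm_qf e h f p q z hS, comm_qe e h f p q z hS,
    comm_qh e h f p q z hS]
  module

lemma pCel (hS : IsSchrodinger e h f p q z) :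
    (ι ℂ p - algebraMap ℂ _ φp) * Cel e h f φp φq
      = Cel e h f φp φq * (ι ℂ p - algebraMap ℂ _ φp)
        - φp ^ 2 • (ι ℂ q - algebraMap ℂ _ φq)
        + (φp * φq) • (ι ℂ p - algebraMap ℂ _ φp) := by
  simp only [Cel, Algebra.algebraMap_eq_smul_one, sub_mul, mul_sub, smul_mul_assoc,
    mul_smul_comm, one_mul, mul_one, comm_pf e h f p q z hS, comm_pe e h f p q z hS,
    comm_ph e h f p q z hS]
  module

lemma qH (hS : IsSchrodinger e h f p q z) :
    (ι ℂ q - algebraMap ℂ _ φq) * ι ℂ h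
      = (ι ℂ h + 1) * (ι ℂ q - algebraMap ℂ _ φq) + algebraMap ℂ _ φq := by
  simp only [Algebra.algebraMap_eq_smul_one, sub_mul, mul_sub, add_mul, smul_mul_assoc,
    mul_smul_comm, one_mul, mul_one, comm_qh e h f p q z hS]
  module

lemma Qel_mem : ι ℂ q - algebraMap ℂ _ φq ∈ qwIdeal p q z φp φq :=
  Submodule.subset_span (by simp)

lemma Pel_mem : ι ℂ p - algebraMap ℂ _ φp ∈ qwIdeal p q z φp φq :=
  Submodule.subset_span (by simp)

lemma QP_pow_mem (hS : IsSchrodinger e h f p q z) (n : ℕ) :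
    (ι ℂ q - algebraMap ℂ _ φq) * Cel e h f φp φq ^ n ∈ qwIdeal p q z φp φq ∧
    (ι ℂ p - algebraMap ℂ _ φp) * Cel e h f φp φq ^ n ∈ qwIdeal p q z φp φq := by
  induction n with
  | zero => simpa using ⟨Qel_mem p q z φp φq, Pel_mem p q z φp φq⟩
  | succ n ih =>
    set Q' := ι ℂ q - algebraMap ℂ (UniversalEnvelopingAlgebra ℂ S) φq with hQ'
    set P' := ι ℂ p - algebraMap ℂ (UniversalEnvelopingAlgebra ℂ S) φp with hP'
    set C' := Cel e h f φp φq with hC'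
    have hmulmem : ∀ x ∈ qwIdeal p q z φp φq, C' * x ∈ qwIdeal p q z φp φq := by
      intro x hx
      simpa [smul_eq_mul] using Submodule.smul_mem (qwIdeal p q z φp φq) C' hx
    constructor
    · have expand : Q' * C' ^ (n + 1)
          = C' * (Q' * C' ^ n) + φq ^ 2 • (P' * C' ^ n) - (φp * φq) • (Q' * C' ^ n) := by
        rw [pow_succ', ← mul_assoc, qCel e h f p q z φp φq hS]
        rw [sub_mul, add_mul, smul_mul_assoc, smul_mul_assoc, mul_assoc]
      rw [expand]
      exact sub_mem (add_mem (hmulmem _ ih.1) (Submodule.smul_of_tower_mem _ _ ih.2))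
        (Submodule.smul_of_tower_mem _ _ ih.1)
    · have expand : P' * C' ^ (n + 1)
          = C' * (P' * C' ^ n) - φp ^ 2 • (Q' * C' ^ n) + (φp * φq) • (P' * C' ^ n) := by
        rw [pow_succ', ← mul_assoc, pCel e h f p q z φp φq hS]
        rw [add_mul, sub_mul, smul_mul_assoc, smul_mul_assoc, mul_assoc]
      rw [expand]
      exact add_mem (sub_mem (hmulmem _ ih.2) (Submodule.smul_of_tower_mem _ _ ih.1))
        (Submodule.smul_of_tower_mem _ _ ih.2)

lemma Q_aeval_mem (hS : IsSchrodinger e h f p q z) (P : ℂ[X]) :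
    (ι ℂ q - algebraMap ℂ _ φq) * aeval (Cel e h f φp φq) P ∈ qwIdeal p q z φp φq := by
  rw [aeval_eq_sum_range, Finset.mul_sum]
  refine Submodule.sum_mem _ fun i _ => ?_
  rw [mul_smul_comm]
  exact Submodule.smul_of_tower_mem _ _ (QP_pow_mem e h f p q z φp φq hS i).1

lemma QF_mem (hS : IsSchrodinger e h f p q z) (m : ℕ) (a : ℕ → ℂ[X]) :
    (ι ℂ q - algebraMap ℂ _ φq) *
      (∑ i ∈ Finset.range (m + 1), ι ℂ f ^ i * aeval (Cel e h f φp φq) (a i))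
      ∈ qwIdeal p q z φp φq := by
  rw [Finset.mul_sum]
  refine Submodule.sum_mem _ fun i _ => ?_
  have hc : Commute (ι ℂ q - algebraMap ℂ (UniversalEnvelopingAlgebra ℂ S) φq) (ι ℂ f ^ i) :=
    Commute.pow_right (Commute.sub_left (comm_qf e h f p q z hS)
      (Algebra.commute_algebraMap_left φq (ι ℂ f))) i
  rw [← mul_assoc, hc.eq, mul_assoc]
  have hm := Q_aeval_mem e h f p q z φp φq hS (a i)
  simpa [smul_eq_mul] using Submodule.smul_mem (qwIdeal p q z φp φq) (ι ℂ f ^ i) hm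

lemma q_pow_H (hS : IsSchrodinger e h f p q z) (n : ℕ) :
    (ι ℂ q - algebraMap ℂ _ φq) * ι ℂ h ^ n
      = (ι ℂ h + 1) ^ n * (ι ℂ q - algebraMap ℂ _ φq)
        + φq • ((ι ℂ h + 1) ^ n - ι ℂ h ^ n) := by
  induction n with
  | zero => simp
  | succ n ih =>
    rw [pow_succ, ← mul_assoc, ih]
    simp only [add_mul, sub_mul, smul_mul_assoc, mul_assoc]
    simp only [comm_qh e h f p q z hS, pow_succ, mul_add, add_mul, mul_one, one_mul,
      sub_mul, mul_sub, smul_mul_assoc, mul_smul_comm, smul_add, smul_sub, mul_assoc,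
      Algebra.algebraMap_eq_smul_one]
    module

lemma q_pow_aeval (hS : IsSchrodinger e h f p q z) (P : ℂ[X]) :
    (ι ℂ q - algebraMap ℂ _ φq) * aeval (ι ℂ h) P
      = aeval (ι ℂ h + 1) P * (ι ℂ q - algebraMap ℂ _ φq)
        + φq • (aeval (ι ℂ h + 1) P - aeval (ι ℂ h) P) := by
  conv_lhs => rw [aeval_eq_sum_range (x := ι ℂ h)]
  rw [Finset.mul_sum]
  have step : ∀ i ∈ Finset.range (P.natDegree + 1),
      (ι ℂ q - algebraMap ℂ _ φq) * (P.coeff i • ι ℂ h ^ i)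
        = P.coeff i • (ι ℂ h + 1) ^ i * (ι ℂ q - algebraMap ℂ _ φq)
          + φq • (P.coeff i • (ι ℂ h + 1) ^ i - P.coeff i • ι ℂ h ^ i) := by
    intro i _
    rw [mul_smul_comm, q_pow_H e h f p q z φq hS i, smul_mul_assoc]
    module
  rw [Finset.sum_congr rfl step, Finset.sum_add_distrib, ← Finset.sum_mul,
    ← Finset.smul_sum, Finset.sum_sub_distrib,
    ← aeval_eq_sum_range (x := ι ℂ h + 1), ← aeval_eq_sum_range (x := ι ℂ h)]

lemma mk_main (hS : IsSchrodinger e h f p q z)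
    (u : UniversalEnvelopingAlgebra ℂ S)
    (hu : (ι ℂ q - algebraMap ℂ _ φq) * u ∈ qwIdeal p q z φp φq) (s : ℕ) :
    ∀ P : ℂ[X],
    (Submodule.Quotient.mk ((ι ℂ q - algebraMap ℂ _ φq) ^ s * (aeval (ι ℂ h) P * u)) :
        Mphi p q z φp φq)
      = φq ^ s • Submodule.Quotient.mk (aeval (ι ℂ h) (Dop^[s] P) * u) := by
  induction s with
  | zero => intro P; simp
  | succ s ih =>
    intro P
    set Q' := ι ℂ q - algebraMap ℂ (UniversalEnvelopingAlgebra ℂ S) φq with hQ'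
    have key : Q' ^ (s + 1) * (aeval (ι ℂ h) P * u)
        = Q' ^ s * (aeval (ι ℂ h + 1) P * (Q' * u))
          + φq • (Q' ^ s * (aeval (ι ℂ h) (Dop P) * u)) := by
      rw [pow_succ, mul_assoc, ← mul_assoc Q', q_pow_aeval e h f p q z φq hS P,
        aeval_Dop]
      simp only [add_mul, smul_mul_assoc, mul_add, mul_smul_comm, mul_assoc]
      rfl
    rw [key]
    have hmem : Q' ^ s * (aeval (ι ℂ h + 1) P * (Q' * u)) ∈ qwIdeal p q z φp φq := by
      rw [← mul_assoc, ← smul_eq_mul]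
      exact Submodule.smul_mem _ _ hu
    rw [Submodule.Quotient.mk_add, (Submodule.Quotient.mk_eq_zero _).mpr hmem, zero_add,
      Submodule.Quotient.mk_smul, ih (Dop P), ← Function.iterate_succ_apply, smul_smul,
      ← pow_succ']

end Aux

/-- For `φ(p)φ(q) ≠ 0`, `a₀,…,a_m ∈ ℂ[x]` and `s, t ∈ ℤ₊`:
`(q − φ(q))ˢ·(hᵗ Σ fⁱ aᵢ(C)·w) = 0` if `s > t`, and
`(q − φ(q))ᵗ·(hᵗ Σ fⁱ aᵢ(C)·w) = t! φ(q)ᵗ Σ fⁱ aᵢ(C)·w`. -/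
theorem q_power_action
    (e h f p q z : S) (hS : IsSchrodinger e h f p q z)
    (φp φq : ℂ) (hφ : φp * φq ≠ 0)
    (m : ℕ) (a : ℕ → ℂ[X]) (s t : ℕ) :
    (s > t →
      uact ((ι ℂ q - algebraMap ℂ _ φq) ^ s)
        (uact (ι ℂ h ^ t *
            ∑ i ∈ Finset.range (m + 1), ι ℂ f ^ i * aeval (Cel e h f φp φq) (a i))
          (wvec p q z φp φq)) = 0) ∧
    uact ((ι ℂ q - algebraMap ℂ _ φq) ^ t)
        (uact (ι ℂ h ^ t *
            ∑ i ∈ Finset.range (m + 1), ι ℂ f ^ i * aeval (Cel e h f φp φq) (a i))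
          (wvec p q z φp φq)) =
      ((t.factorial : ℂ) * φq ^ t) •
        uact (∑ i ∈ Finset.range (m + 1), ι ℂ f ^ i * aeval (Cel e h f φp φq) (a i))
          (wvec p q z φp φq) := by
  classical
  set F := ∑ i ∈ Finset.range (m + 1), ι ℂ f ^ i * aeval (Cel e h f φp φq) (a i) with hF
  have hu : (ι ℂ q - algebraMap ℂ _ φq) * F ∈ qwIdeal p q z φp φq :=
    QF_mem e h f p q z φp φq hS m a
  have hmk : ∀ u : UniversalEnvelopingAlgebra ℂ S,
      uact u (wvec p q z φp φq) = (Submodule.Quotient.mk u : Mphi p q z φp φq) := by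
    intro u; rw [wvec, uact_mk, mul_one]
  have hHt : ι ℂ h ^ t * F = aeval (ι ℂ h) ((X : ℂ[X]) ^ t) * F := by rw [aeval_X_pow]
  have hdeg : ((X : ℂ[X]) ^ t).natDegree ≤ t := by simp [natDegree_X_pow]
  constructor
  · intro hst
    rw [hmk, uact_mk, hHt, mk_main e h f p q z φp φq hS F hu s ((X : ℂ[X]) ^ t)]
    have h0 : Dop^[t+1] ((X : ℂ[X]) ^ t) = 0 := (Dop_key t _ hdeg).1
    have hzero : Dop^[s] ((X : ℂ[X]) ^ t) = 0 := by
      obtain ⟨k, rfl⟩ : ∃ k, s = k + (t + 1) := ⟨s - (t + 1), by omega⟩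
      rw [Function.iterate_add_apply, h0]
      exact Function.iterate_fixed (by simp [Dop]) k
    rw [hzero]
    simp
  · rw [hmk, uact_mk, hmk, hHt, mk_main e h f p q z φp φq hS F hu t ((X : ℂ[X]) ^ t)]
    have h2 : Dop^[t] ((X : ℂ[X]) ^ t) = C (t.factorial : ℂ) := by
      have h3 := (Dop_key t _ hdeg).2
      rwa [coeff_X_pow, if_pos rfl, mul_one] at h3
    rw [h2]
    have h4 : aeval (ι ℂ h) (C (t.factorial : ℂ)) * F = (t.factorial : ℂ) • F := by
      rw [aeval_C, ← Algebra.smul_def]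
    rw [h4, Submodule.Quotient.mk_smul, smul_smul, mul_comm]

end QW
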